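/- arXiv:2409.18684 — 5 statements merged into one kernel-verified Lean document; each statement's English description precedes it below -/
import Mathlib

section
/- Let X and Y be nonnegative absolutely continuous random variables with finite means and strictly increasing distribution functions F and G, and let h be a convex, strictly increasing distortion function. If X ≤_qmit Y, then X_h ≤_qmit Y_h. -/
open MeasureTheory Set Filter

/-- The (generalized inverse) quantile function of a distribution function `F`. -/
noncomputable def quantile (F : ℝ → ℝ) (p : ℝ) : ℝ := sInf {x : ℝ | p ≤ F x}

/-- `F` is the distribution function of a nonnegative random variable
(with total mass one). -/
def IsNonnegCDF (F : ℝ → ℝ) : Prop :=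
  Monotone F ∧ (∀ x : ℝ, x ≤ 0 → F x = 0) ∧ Tendsto F atTop (nhds 1)

/-- A distortion function: a left-continuous increasing map of `[0,1]` onto itself
with `h 0 = 0` and `h 1 = 1`. -/
def IsDistortionFn (h : ℝ → ℝ) : Prop :=
  MonotoneOn h (Icc 0 1) ∧ (∀ p ∈ Ioc (0:ℝ) 1, ContinuousWithinAt h (Iio p) p) ∧
    h 0 = 0 ∧ h 1 = 1 ∧ MapsTo h (Icc 0 1) (Icc 0 1)

/-- `h` is starshaped: `h p / p` is increasing on `(0,1]`. -/
def Starshaped (h : ℝ → ℝ) : Prop := MonotoneOn (fun p => h p / p) (Ioc 0 1)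

/-- `h` is antistarshaped: `h p / p` is decreasing on `(0,1]`. -/
def Antistarshaped (h : ℝ → ℝ) : Prop := AntitoneOn (fun p => h p / p) (Ioc 0 1)

/-- Distribution function of the distorted random variable `X_h`,
whose survival function is `h ∘ (1 - F)`. -/
noncomputable def distortedCDF (h F : ℝ → ℝ) : ℝ → ℝ := fun x => 1 - h (1 - F x)

/-- `∫_0^{F⁻¹(p)} (1 - F(x)) dx`. -/
noncomputable def tttIntegral (F : ℝ → ℝ) (p : ℝ) : ℝ :=
  ∫ x in (0:ℝ)..(quantile F p), (1 - F x)

/-- `∫_{F⁻¹(p)}^∞ (1 - F(x)) dx`. -/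
noncomputable def ewIntegral (F : ℝ → ℝ) (p : ℝ) : ℝ :=
  ∫ x in Ioi (quantile F p), (1 - F x)

/-- `∫_0^{F⁻¹(p)} F(x) dx`. -/
noncomputable def mitIntegral (F : ℝ → ℝ) (p : ℝ) : ℝ :=
  ∫ x in (0:ℝ)..(quantile F p), F x

/-- Total time on test transform order. -/
def TTT_le (F G : ℝ → ℝ) : Prop := ∀ p ∈ Ioo (0:ℝ) 1, tttIntegral F p ≤ tttIntegral G p

/-- Excess wealth order. -/
def EW_le (F G : ℝ → ℝ) : Prop := ∀ p ∈ Ioo (0:ℝ) 1, ewIntegral F p ≤ ewIntegral G p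

/-- Decreasing mean residual life order. -/
def DMRL_le (F G : ℝ → ℝ) : Prop :=
  MonotoneOn (fun p => ewIntegral G p / ewIntegral F p) (Ioo (0:ℝ) 1)

/-- Quantile mean inactivity time order. -/
def QMIT_le (F G : ℝ → ℝ) : Prop :=
  AntitoneOn (fun p => mitIntegral F p / mitIntegral G p) (Ioo (0:ℝ) 1)

/-!
Put `H u = 1 - h (1 - u)`, so that `X_h` has distribution function `H ∘ F`. Its quantile at `p`
is `F⁻¹ (φ p)`, where `φ p` is the least `u` with `p ≤ H u`: a level depending on `h` alone and
increasing in `p`. It therefore suffices that `Ψ_F q / Ψ_G q` decreases, where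
`Ψ_F q = ∫_0^{F⁻¹ q} H (F x) dx`.

Convexity of `h` makes the chord slope `H u / u` decreasing. The layer-cake formula for it,
with `τ` its generalized inverse, gives `Ψ_F q = ∫_0^∞ M_F (min q (τ s)) ds`, where `M_F` is the
mean inactivity integral `mitIntegral F`. Since `M_F / M_G` decreases, comparing both mixtures
with the ratio at the smaller level shows that `Ψ_F / Ψ_G` decreases too.
-/

namespace IsNonnegCDF

variable {F : ℝ → ℝ}

theorem nonneg (hF : IsNonnegCDF F) (x : ℝ) : 0 ≤ F x := by
  rcases le_total x 0 with hx | hx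
  · rw [hF.2.1 x hx]
  · rw [← hF.2.1 0 le_rfl]; exact hF.1 hx

theorem le_one (hF : IsNonnegCDF F) (x : ℝ) : F x ≤ 1 :=
  hF.1.ge_of_tendsto hF.2.2 x

theorem mem_Icc (hF : IsNonnegCDF F) (x : ℝ) : F x ∈ Icc (0 : ℝ) 1 :=
  ⟨hF.nonneg x, hF.le_one x⟩

theorem quantile_of_nonpos (hF : IsNonnegCDF F) {p : ℝ} (hp : p ≤ 0) : quantile F p = 0 := by
  have : {x : ℝ | p ≤ F x} = univ := eq_univ_of_forall fun x => hp.trans (hF.nonneg x)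
  rw [quantile, this, Real.sInf_univ]

theorem le_iff_quantile_le (hF : IsNonnegCDF F) (hFr : ∀ x, ContinuousWithinAt F (Ici x) x)
    {p : ℝ} (hp : p ∈ Ioo (0 : ℝ) 1) (x : ℝ) : p ≤ F x ↔ quantile F p ≤ x := by
  have hne : {y | p ≤ F y}.Nonempty :=
    ((hF.2.2.eventually (eventually_ge_nhds hp.2)).exists)
  have hbdd : BddBelow {y | p ≤ F y} := ⟨0, fun y hy => by
    by_contra! hy0
    linarith [hp.1, hF.2.1 y hy0.le, show p ≤ F y from hy]⟩
  refine ⟨fun hx => csInf_le hbdd hx, fun hx => le_trans ?_ (hF.1 hx)⟩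
  refine ge_of_tendsto ((hFr _).mono Ioi_subset_Ici_self).tendsto ?_
  filter_upwards [self_mem_nhdsWithin] with y hy
  obtain ⟨z, hz, hzy⟩ := exists_lt_of_csInf_lt hne hy
  exact hz.trans (hF.1 hzy.le)

theorem quantile_pos (hF : IsNonnegCDF F) (hFr : ∀ x, ContinuousWithinAt F (Ici x) x)
    {p : ℝ} (hp : p ∈ Ioo (0 : ℝ) 1) : 0 < quantile F p := by
  rw [← not_le, ← hF.le_iff_quantile_le hFr hp, hF.2.1 0 le_rfl, not_le]
  exact hp.1

theorem quantile_nonneg (hF : IsNonnegCDF F) (hFr : ∀ x, ContinuousWithinAt F (Ici x) x)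
    {p : ℝ} (hp : p < 1) : 0 ≤ quantile F p := by
  rcases le_or_gt p 0 with hp0 | hp0
  · exact (hF.quantile_of_nonpos hp0).ge
  · exact (hF.quantile_pos hFr ⟨hp0, hp⟩).le

theorem quantile_mono (hF : IsNonnegCDF F) (hFr : ∀ x, ContinuousWithinAt F (Ici x) x)
    {p p' : ℝ} (hpp' : p ≤ p') (hp' : p' < 1) : quantile F p ≤ quantile F p' := by
  rcases le_or_gt p 0 with hp0 | hp0
  · rw [hF.quantile_of_nonpos hp0]; exact hF.quantile_nonneg hFr hp'
  · rw [← hF.le_iff_quantile_le hFr ⟨hp0, hpp'.trans_lt hp'⟩]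
    exact hpp'.trans ((hF.le_iff_quantile_le hFr ⟨hp0.trans_le hpp', hp'⟩ _).2 le_rfl)

theorem pos_of_strictMonoOn (hF : IsNonnegCDF F) (hFs : StrictMonoOn F (Ici 0))
    {x : ℝ} (hx : 0 < x) : 0 < F x := by
  simpa [hF.2.1 0 le_rfl] using hFs self_mem_Ici hx.le hx

theorem lt_one_of_strictMonoOn (hF : IsNonnegCDF F) (hFs : StrictMonoOn F (Ici 0))
    (x : ℝ) : F x < 1 := by
  have hx : max x 0 < max x 0 + 1 := lt_add_one _
  calc F x ≤ F (max x 0) := hF.1 (le_max_left x 0)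
    _ < F (max x 0 + 1) := hFs (le_max_right x 0) (le_max_right x 0 |>.trans hx.le) hx
    _ ≤ 1 := hF.le_one _

theorem apply_quantile (hF : IsNonnegCDF F) (hFc : Continuous F) {r : ℝ}
    (hr : r ∈ Ioo (0 : ℝ) 1) : F (quantile F r) = r := by
  have hFr : ∀ x, ContinuousWithinAt F (Ici x) x := fun _ => hFc.continuousWithinAt
  obtain ⟨b, hb⟩ := (hF.2.2.eventually (eventually_ge_nhds hr.2)).exists
  obtain ⟨a, ha⟩ : r ∈ range F :=
    intermediate_value_univ 0 b hFc ⟨(hF.2.1 0 le_rfl).trans_le hr.1.le, hb⟩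
  refine le_antisymm ?_ ((hF.le_iff_quantile_le hFr hr _).2 le_rfl)
  calc F (quantile F r) ≤ F a := hF.1 ((hF.le_iff_quantile_le hFr hr a).1 ha.ge)
    _ = r := ha

theorem setOf_pos_and_le_eq_Ioc_quantile (hF : IsNonnegCDF F) (hFc : Continuous F)
    (hFs : StrictMonoOn F (Ici 0)) {r : ℝ} (hr : r < 1) :
    {x | 0 < x ∧ F x ≤ r} = Ioc 0 (quantile F r) := by
  rcases le_or_gt r 0 with hr0 | hr0
  · rw [hF.quantile_of_nonpos hr0, Ioc_self, eq_empty_iff_forall_notMem]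
    exact fun x hx => (hF.pos_of_strictMonoOn hFs hx.1).not_ge (hx.2.trans hr0)
  · ext x
    refine and_congr_right fun hx => ?_
    have hq := hF.quantile_pos (fun _ => hFc.continuousWithinAt) ⟨hr0, hr⟩
    conv_lhs => rw [← hF.apply_quantile hFc ⟨hr0, hr⟩]
    exact hFs.le_iff_le hx.le hq.le

theorem mitIntegral_of_nonpos (hF : IsNonnegCDF F) {r : ℝ} (hr : r ≤ 0) :
    mitIntegral F r = 0 := by
  rw [mitIntegral, hF.quantile_of_nonpos hr, intervalIntegral.integral_same]

theorem monotoneOn_mitIntegral (hF : IsNonnegCDF F)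
    (hFr : ∀ x, ContinuousWithinAt F (Ici x) x) : MonotoneOn (mitIntegral F) (Iio 1) :=
  fun _ hr _ hr' hrr' => intervalIntegral.integral_mono_interval le_rfl
    (hF.quantile_nonneg hFr hr) (hF.quantile_mono hFr hrr' hr')
    (ae_of_all _ hF.nonneg) hF.1.intervalIntegrable

theorem mitIntegral_nonneg (hF : IsNonnegCDF F)
    (hFr : ∀ x, ContinuousWithinAt F (Ici x) x) {r : ℝ} (hr : r < 1) : 0 ≤ mitIntegral F r :=
  intervalIntegral.integral_nonneg (hF.quantile_nonneg hFr hr) fun x _ => hF.nonneg x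

theorem mitIntegral_pos (hF : IsNonnegCDF F) (hFc : Continuous F)
    (hFs : StrictMonoOn F (Ici 0)) {r : ℝ} (hr : r ∈ Ioo (0 : ℝ) 1) : 0 < mitIntegral F r :=
  intervalIntegral.intervalIntegral_pos_of_pos_on hF.1.intervalIntegrable
    (fun _ hx => hF.pos_of_strictMonoOn hFs hx.1)
    (hF.quantile_pos (fun _ => hFc.continuousWithinAt) hr)

theorem ofReal_mitIntegral (hF : IsNonnegCDF F) (hFc : Continuous F)
    (hFs : StrictMonoOn F (Ici 0)) {r : ℝ} (hr : r < 1) :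
    ENNReal.ofReal (mitIntegral F r) = ∫⁻ x in {x | 0 < x ∧ F x ≤ r}, ENNReal.ofReal (F x) := by
  rw [hF.setOf_pos_and_le_eq_Ioc_quantile hFc hFs hr, mitIntegral,
    intervalIntegral.integral_of_le (hF.quantile_nonneg (fun _ => hFc.continuousWithinAt) hr),
    ofReal_integral_eq_lintegral_ofReal hFc.integrableOn_Ioc (ae_of_all _ hF.nonneg)]

end IsNonnegCDF

def dualDistortion (h : ℝ → ℝ) (u : ℝ) : ℝ := 1 - h (1 - u)

theorem distortedCDF_eq_comp (h F : ℝ → ℝ) : distortedCDF h F = dualDistortion h ∘ F := rfl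

noncomputable def uniformCDF (x : ℝ) : ℝ := projIcc (0 : ℝ) 1 zero_le_one x

theorem continuous_uniformCDF : Continuous uniformCDF :=
  continuous_subtype_val.comp continuous_projIcc

theorem uniformCDF_of_mem {u : ℝ} (hu : u ∈ Icc (0 : ℝ) 1) : uniformCDF u = u := by
  simp [uniformCDF, projIcc_of_mem _ hu]

theorem isNonnegCDF_uniformCDF : IsNonnegCDF uniformCDF := by
  refine ⟨fun x y hxy => monotone_projIcc zero_le_one hxy, fun x hx => ?_, ?_⟩
  · simp [uniformCDF, projIcc_of_le_left _ hx]
  · refine tendsto_const_nhds.congr' ?_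
    filter_upwards [eventually_ge_atTop 1] with x hx
    simp [uniformCDF, projIcc_of_right_le _ hx]

namespace IsDistortionFn

variable {h : ℝ → ℝ}

theorem dualDistortion_zero (hdist : IsDistortionFn h) : dualDistortion h 0 = 0 := by
  simp [dualDistortion, hdist.2.2.2.1]

theorem dualDistortion_one (hdist : IsDistortionFn h) : dualDistortion h 1 = 1 := by
  simp [dualDistortion, hdist.2.2.1]

theorem monotoneOn_dualDistortion (hdist : IsDistortionFn h) :
    MonotoneOn (dualDistortion h) (Icc 0 1) := fun u hu v hv huv => by
  have := hdist.1 (Icc.mem_iff_one_sub_mem.1 hv) (Icc.mem_iff_one_sub_mem.1 hu) (by linarith)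
  simp only [dualDistortion]; linarith

theorem dualDistortion_mem_Icc (hdist : IsDistortionFn h) {u : ℝ} (hu : u ∈ Icc (0 : ℝ) 1) :
    dualDistortion h u ∈ Icc (0 : ℝ) 1 := by
  have := hdist.2.2.2.2 (Icc.mem_iff_one_sub_mem.1 hu)
  exact ⟨by simp only [dualDistortion]; linarith [this.2],
    by simp only [dualDistortion]; linarith [this.1]⟩

/-- `dualDistortion h u / u` is the slope of the chord of `h` over `[1 - u, 1]`. -/
theorem antistarshaped_dualDistortion (hdist : IsDistortionFn h)
    (hconv : ConvexOn ℝ (Icc 0 1) h) : Antistarshaped (dualDistortion h) := by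
  intro u hu v hv huv
  show dualDistortion h v / v ≤ dualDistortion h u / u
  have hchord : ∀ w ∈ Ioc (0 : ℝ) 1,
      dualDistortion h w / w = (h (1 - w) - h 1) / ((1 - w) - 1) := fun w _ => by
    rw [dualDistortion, hdist.2.2.2.1, ← neg_div_neg_eq]; ring_nf
  rw [hchord u hu, hchord v hv]
  exact hconv.secant_mono (right_mem_Icc.2 zero_le_one)
    (Icc.mem_iff_one_sub_mem.1 (Ioc_subset_Icc_self hv))
    (Icc.mem_iff_one_sub_mem.1 (Ioc_subset_Icc_self hu)) (by linarith [hv.1]) (by linarith [hu.1])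
    (by linarith)

theorem le_dualDistortion (hdist : IsDistortionFn h) (hconv : ConvexOn ℝ (Icc 0 1) h)
    {u : ℝ} (hu : u ∈ Icc (0 : ℝ) 1) : u ≤ dualDistortion h u := by
  rcases hu.1.eq_or_lt with rfl | hu0
  · rw [hdist.dualDistortion_zero]
  · have := hdist.antistarshaped_dualDistortion hconv ⟨hu0, hu.2⟩ (right_mem_Ioc.2 one_pos) hu.2
    dsimp only at this
    rwa [hdist.dualDistortion_one, div_one, le_div_iff₀ hu0, one_mul] at this

theorem continuousWithinAt_Icc (hdist : IsDistortionFn h) {p : ℝ} (hp : p ∈ Icc (0 : ℝ) 1) :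
    ContinuousWithinAt h (Icc 0 p) p := by
  rcases hp.1.eq_or_lt with rfl | hp0
  · simp
  · exact (continuousWithinAt_Iio_iff_Iic.1 (hdist.2.1 p ⟨hp0, hp.2⟩)).mono fun _ hx => hx.2

theorem continuousWithinAt_distortedCDF (hdist : IsDistortionFn h) {F : ℝ → ℝ}
    (hF : IsNonnegCDF F) {x : ℝ} (hFx : ContinuousWithinAt F (Ici x) x) :
    ContinuousWithinAt (distortedCDF h F) (Ici x) x := by
  have hmaps : MapsTo (fun y => 1 - F y) (Ici x) (Icc 0 (1 - F x)) := fun y hy =>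
    ⟨by linarith [hF.le_one y], by linarith [hF.1 (mem_Ici.1 hy)]⟩
  have hFx' : ContinuousWithinAt (fun y => 1 - F y) (Ici x) x := continuousWithinAt_const.sub hFx
  have hhF : ContinuousWithinAt (fun y => h (1 - F y)) (Ici x) x :=
    ContinuousWithinAt.comp (f := fun y => 1 - F y)
      (hdist.continuousWithinAt_Icc (Icc.mem_iff_one_sub_mem.1 (hF.mem_Icc x))) hFx' hmaps
  exact continuousWithinAt_const.sub hhF

theorem isNonnegCDF_distortedCDF (hdist : IsDistortionFn h) (hconv : ConvexOn ℝ (Icc 0 1) h)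
    {F : ℝ → ℝ} (hF : IsNonnegCDF F) : IsNonnegCDF (distortedCDF h F) := by
  refine ⟨fun x y hxy => hdist.monotoneOn_dualDistortion (hF.mem_Icc x) (hF.mem_Icc y) (hF.1 hxy),
    fun x hx => by simp [distortedCDF_eq_comp, hF.2.1 x hx, hdist.dualDistortion_zero], ?_⟩
  exact tendsto_of_tendsto_of_tendsto_of_le_of_le hF.2.2 tendsto_const_nhds
    (fun x => hdist.le_dualDistortion hconv (hF.mem_Icc x))
    (fun x => (hdist.dualDistortion_mem_Icc (hF.mem_Icc x)).2)

theorem continuousWithinAt_distortedCDF_uniformCDF (hdist : IsDistortionFn h) (x : ℝ) :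
    ContinuousWithinAt (distortedCDF h uniformCDF) (Ici x) x :=
  hdist.continuousWithinAt_distortedCDF isNonnegCDF_uniformCDF
    continuous_uniformCDF.continuousWithinAt

/-- `quantile (distortedCDF h uniformCDF) p` is the least `u ∈ [0, 1]` with
`p ≤ dualDistortion h u`: the level at which every distorted quantile is taken. -/
theorem quantile_distortedCDF (hdist : IsDistortionFn h) (hconv : ConvexOn ℝ (Icc 0 1) h)
    {F : ℝ → ℝ} (hF : IsNonnegCDF F) {p : ℝ} (hp : p ∈ Ioo (0 : ℝ) 1) :
    quantile (distortedCDF h F) p = quantile F (quantile (distortedCDF h uniformCDF) p) := by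
  have hU := hdist.isNonnegCDF_distortedCDF hconv isNonnegCDF_uniformCDF
  have hUr := hdist.continuousWithinAt_distortedCDF_uniformCDF
  have hset : {x | p ≤ distortedCDF h F x} =
      {x | quantile (distortedCDF h uniformCDF) p ≤ F x} := by
    ext x
    have hFx : distortedCDF h F x = distortedCDF h uniformCDF (F x) := by
      simp only [distortedCDF, uniformCDF_of_mem (hF.mem_Icc x)]
    rw [mem_ofPred_eq, hFx, hU.le_iff_quantile_le hUr hp, mem_ofPred_eq]
  rw [quantile, hset]
  rfl

theorem quantile_distortedCDF_uniformCDF_mem (hdist : IsDistortionFn h)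
    (hconv : ConvexOn ℝ (Icc 0 1) h) {p : ℝ} (hp : p ∈ Ioo (0 : ℝ) 1) :
    quantile (distortedCDF h uniformCDF) p ∈ Ioo (0 : ℝ) 1 := by
  have hU := hdist.isNonnegCDF_distortedCDF hconv isNonnegCDF_uniformCDF
  have hUr := hdist.continuousWithinAt_distortedCDF_uniformCDF
  refine ⟨hU.quantile_pos hUr hp, lt_of_le_of_lt ((hU.le_iff_quantile_le hUr hp p).1 ?_) hp.2⟩
  have hp' : p ∈ Icc (0 : ℝ) 1 := Ioo_subset_Icc_self hp
  simpa only [distortedCDF_eq_comp, Function.comp_apply, uniformCDF_of_mem hp'] using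
    hdist.le_dualDistortion hconv hp'

end IsDistortionFn

/-- Generalized inverse of the chord slope `u ↦ H u / u` on `(0, 1)`. -/
noncomputable def invChordSlope (H : ℝ → ℝ) (s : ℝ) : ℝ := sSup {u | u ∈ Ioo 0 1 ∧ s < H u / u}

section invChordSlope

variable {H : ℝ → ℝ}

theorem invChordSlope_nonneg (s : ℝ) : 0 ≤ invChordSlope H s :=
  Real.sSup_nonneg fun _ hu => hu.1.1.le

theorem antitone_invChordSlope : Antitone (invChordSlope H) := by
  intro s s' hss'
  rcases eq_empty_or_nonempty {u | u ∈ Ioo 0 1 ∧ s' < H u / u} with he | hne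
  · rw [invChordSlope, he, Real.sSup_empty]; exact invChordSlope_nonneg s
  · exact csSup_le_csSup ⟨1, fun u hu => hu.1.2.le⟩ hne fun u hu => ⟨hu.1, hss'.trans_lt hu.2⟩

theorem measurable_invChordSlope : Measurable (invChordSlope H) :=
  antitone_invChordSlope.measurable

theorem volume_setOf_le_invChordSlope (hmono : MonotoneOn H (Icc 0 1)) (hH : Antistarshaped H)
    {u : ℝ} (hu : u ∈ Ioo (0 : ℝ) 1) :
    volume ({s | u ≤ invChordSlope H s} ∩ Ioi 0) = ENNReal.ofReal (H u / u) := by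
  have hsub : Ioo 0 (H u / u) ⊆ {s | u ≤ invChordSlope H s} ∩ Ioi 0 := fun s hs =>
    ⟨le_csSup (s := {v | v ∈ Ioo 0 1 ∧ s < H v / v}) ⟨1, fun _ hv => hv.1.2.le⟩ ⟨hu, hs.2⟩, hs.1⟩
  have hsup : {s | u ≤ invChordSlope H s} ∩ Ioi 0 ⊆ Ioc 0 (H u / u) := by
    rintro s ⟨hsu, hs : 0 < s⟩
    refine ⟨hs, le_of_not_gt fun hlt => ?_⟩
    -- the superlevel set at `s` lies below `H u / s < u`
    have hbound : ∀ v ∈ {v | v ∈ Ioo 0 1 ∧ s < H v / v}, v ≤ H u / s := by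
      rintro v ⟨hv, hsv⟩
      have hvu : v < u := lt_of_not_ge fun huv =>
        (hH ⟨hu.1, hu.2.le⟩ ⟨hv.1, hv.2.le⟩ huv).not_gt (hlt.trans hsv)
      rw [le_div_iff₀ hs, mul_comm]
      calc s * v ≤ H v := by rw [lt_div_iff₀ hv.1] at hsv; exact hsv.le
        _ ≤ H u := hmono ⟨hv.1.le, hv.2.le⟩ ⟨hu.1.le, hu.2.le⟩ hvu.le
    have hne : {v | v ∈ Ioo 0 1 ∧ s < H v / v}.Nonempty := by
      by_contra hempty
      rw [not_nonempty_iff_eq_empty] at hempty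
      simp only [mem_ofPred_eq, invChordSlope, hempty, Real.sSup_empty] at hsu
      exact hu.1.not_ge hsu
    have : u ≤ H u / s := hsu.trans (csSup_le hne hbound)
    rw [div_lt_iff₀ hu.1] at hlt
    rw [le_div_iff₀ hs] at this
    linarith
  refine le_antisymm ?_ ?_
  · simpa using measure_mono (μ := volume) hsup
  · simpa using measure_mono (μ := volume) hsub

theorem setLIntegral_indicator_le_invChordSlope (hmono : MonotoneOn H (Icc 0 1))
    (hH : Antistarshaped H) {u : ℝ} (hu : u ∈ Ioo (0 : ℝ) 1) :
    ∫⁻ s in Ioi 0, {s | u ≤ invChordSlope H s}.indicator (fun _ => ENNReal.ofReal u) s =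
      ENNReal.ofReal (H u) := by
  rw [setLIntegral_indicator (measurableSet_le measurable_const measurable_invChordSlope),
    setLIntegral_const, volume_setOf_le_invChordSlope hmono hH hu, ← ENNReal.ofReal_mul hu.1.le,
    mul_div_cancel₀ _ hu.1.ne']

end invChordSlope

theorem MeasureTheory.integrable_and_integral_eq_of_lintegral_ofReal_eq {α : Type*}
    [MeasurableSpace α] {μ : Measure α} {f : α → ℝ} (hf : AEStronglyMeasurable f μ)
    (hf0 : 0 ≤ᵐ[μ] f) {c : ℝ} (hc : 0 ≤ c) (h : ∫⁻ a, ENNReal.ofReal (f a) ∂μ = ENNReal.ofReal c) :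
    Integrable f μ ∧ ∫ a, f a ∂μ = c :=
  ⟨⟨hf, (hasFiniteIntegral_iff_ofReal hf0).2 (h ▸ ENNReal.ofReal_lt_top)⟩,
    by rw [integral_eq_lintegral_of_nonneg_ae hf0 hf, h, ENNReal.toReal_ofReal hc]⟩

/-- Mixing over the cut-off level preserves a decreasing ratio: if `A / B` decreases on
`[0, q₂]`, so does `q ↦ ∫ A (min q τ) / ∫ B (min q τ)`. -/
theorem integral_mul_integral_le_of_cross {α : Type*} [MeasurableSpace α] {μ : Measure α}
    {A B : ℝ → ℝ} {τ : α → ℝ} {q₁ q₂ : ℝ} (hq₁ : 0 ≤ q₁) (hq : q₁ ≤ q₂) (hτ : ∀ s, 0 ≤ τ s)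
    (hcross : ∀ u ∈ Icc 0 q₂, ∀ v ∈ Icc 0 q₂, u ≤ v → A v * B u ≤ A u * B v)
    (hBmono : MonotoneOn B (Icc 0 q₂)) (hB0 : ∀ u ∈ Icc 0 q₂, 0 ≤ B u) (hBq₁ : 0 < B q₁)
    (hA₁ : Integrable (fun s => A (min q₁ (τ s))) μ)
    (hA₂ : Integrable (fun s => A (min q₂ (τ s))) μ)
    (hB₁ : Integrable (fun s => B (min q₁ (τ s))) μ)
    (hB₂ : Integrable (fun s => B (min q₂ (τ s))) μ) :
    (∫ s, A (min q₂ (τ s)) ∂μ) * ∫ s, B (min q₁ (τ s)) ∂μ ≤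
      (∫ s, A (min q₁ (τ s)) ∂μ) * ∫ s, B (min q₂ (τ s)) ∂μ := by
  have hmem₁ : ∀ s, min q₁ (τ s) ∈ Icc 0 q₂ := fun s =>
    ⟨le_min hq₁ (hτ s), (min_le_left _ _).trans hq⟩
  have hmem₂ : ∀ s, min q₂ (τ s) ∈ Icc 0 q₂ := fun s =>
    ⟨le_min (hq₁.trans hq) (hτ s), min_le_left _ _⟩
  have hq₁mem : q₁ ∈ Icc 0 q₂ := ⟨hq₁, hq⟩
  -- both pointwise inequalities compare with the ratio at `q₁`
  have hbelow : ∀ s, A q₁ * B (min q₁ (τ s)) ≤ B q₁ * A (min q₁ (τ s)) := fun s => by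
    have := hcross _ (hmem₁ s) q₁ hq₁mem (min_le_left _ _)
    linarith
  have habove : ∀ s, B q₁ * A (min q₂ (τ s)) + A q₁ * B (min q₁ (τ s)) ≤
      A q₁ * B (min q₂ (τ s)) + B q₁ * A (min q₁ (τ s)) := fun s => by
    rcases le_total (τ s) q₁ with hτq | hτq
    · rw [min_eq_right hτq, min_eq_right (hτq.trans hq), add_comm]
    · have := hcross q₁ hq₁mem _ (hmem₂ s) (le_min hq hτq)
      rw [min_eq_left hτq]
      linarith
  have I₁ : A q₁ * ∫ s, B (min q₁ (τ s)) ∂μ ≤ B q₁ * ∫ s, A (min q₁ (τ s)) ∂μ := by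
    rw [← integral_const_mul, ← integral_const_mul]
    exact integral_mono (hB₁.const_mul _) (hA₁.const_mul _) hbelow
  have I₂ : B q₁ * (∫ s, A (min q₂ (τ s)) ∂μ) + A q₁ * ∫ s, B (min q₁ (τ s)) ∂μ ≤
      A q₁ * (∫ s, B (min q₂ (τ s)) ∂μ) + B q₁ * ∫ s, A (min q₁ (τ s)) ∂μ := by
    simp only [← integral_const_mul]
    rw [← integral_add (hA₂.const_mul _) (hB₁.const_mul _),
      ← integral_add (hB₂.const_mul _) (hA₁.const_mul _)]
    exact integral_mono ((hA₂.const_mul _).add (hB₁.const_mul _))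
      ((hB₂.const_mul _).add (hA₁.const_mul _)) habove
  have I₃ : ∫ s, B (min q₁ (τ s)) ∂μ ≤ ∫ s, B (min q₂ (τ s)) ∂μ :=
    integral_mono hB₁ hB₂ fun s => hBmono (hmem₁ s) (hmem₂ s) (min_le_min_right _ hq)
  have I₄ : 0 ≤ ∫ s, B (min q₁ (τ s)) ∂μ := integral_nonneg fun s => hB0 _ (hmem₁ s)
  refine le_of_mul_le_mul_left ?_ hBq₁
  nlinarith [mul_le_mul_of_nonneg_left I₂ I₄, mul_le_mul_of_nonneg_left I₁ (sub_nonneg.2 I₃)]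

section Mixture

variable {F h : ℝ → ℝ}

/-- Writing `H (F x) = F x * (H (F x) / F x)` and expanding the chord slope by the layer-cake
formula, Tonelli turns the cut-off `F x ≤ q` into `F x ≤ min q (invChordSlope H s)`. -/
theorem IsNonnegCDF.lintegral_mitIntegral_min_invChordSlope {H : ℝ → ℝ} (hF : IsNonnegCDF F)
    (hFc : Continuous F) (hFs : StrictMonoOn F (Ici 0)) (hmono : MonotoneOn H (Icc 0 1))
    (hH : Antistarshaped H) {q : ℝ} (hq : q < 1) :
    ∫⁻ s in Ioi 0, ENNReal.ofReal (mitIntegral F (min q (invChordSlope H s))) =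
      ∫⁻ x in {x | 0 < x ∧ F x ≤ q}, ENNReal.ofReal (H (F x)) := by
  have hmeas : ∀ x, MeasurableSet {x' | F x' ≤ x} := fun _ =>
    measurableSet_le hFc.measurable measurable_const
  have hkernel : Measurable fun p : ℝ × ℝ =>
      {s | F p.1 ≤ invChordSlope H s}.indicator (fun _ => ENNReal.ofReal (F p.1)) p.2 :=
    (ENNReal.measurable_ofReal.comp (hFc.measurable.comp measurable_fst)).indicator
      (measurableSet_le (hFc.measurable.comp measurable_fst)
        (measurable_invChordSlope.comp measurable_snd))
  symm
  calc ∫⁻ x in {x | 0 < x ∧ F x ≤ q}, ENNReal.ofReal (H (F x))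
      = ∫⁻ x in {x | 0 < x ∧ F x ≤ q}, ∫⁻ s in Ioi 0,
          {s | F x ≤ invChordSlope H s}.indicator (fun _ => ENNReal.ofReal (F x)) s := by
        refine setLIntegral_congr_fun (measurableSet_Ioi.inter (hmeas q)) fun x hx => ?_
        exact (setLIntegral_indicator_le_invChordSlope hmono hH
          ⟨hF.pos_of_strictMonoOn hFs hx.1, hF.lt_one_of_strictMonoOn hFs x⟩).symm
    _ = ∫⁻ s in Ioi 0, ∫⁻ x in {x | 0 < x ∧ F x ≤ q},
          {x | F x ≤ invChordSlope H s}.indicator (fun x => ENNReal.ofReal (F x)) x :=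
        lintegral_lintegral_swap hkernel.aemeasurable
    _ = ∫⁻ s in Ioi 0, ENNReal.ofReal (mitIntegral F (min q (invChordSlope H s))) := by
        refine lintegral_congr fun s => ?_
        rw [setLIntegral_indicator (hmeas _), hF.ofReal_mitIntegral hFc hFs (min_lt_of_left_lt hq)]
        congr 2
        ext x
        simp only [mem_inter_iff, mem_ofPred_eq, le_min_iff]
        tauto

theorem IsNonnegCDF.integral_mitIntegral_min_invChordSlope (hF : IsNonnegCDF F)
    (hFc : Continuous F) (hFs : StrictMonoOn F (Ici 0)) (hdist : IsDistortionFn h)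
    (hconv : ConvexOn ℝ (Icc 0 1) h) {q : ℝ} (hq : q ∈ Ioo (0 : ℝ) 1) :
    IntegrableOn (fun s => mitIntegral F (min q (invChordSlope (dualDistortion h) s))) (Ioi 0) ∧
      ∫ s in Ioi 0, mitIntegral F (min q (invChordSlope (dualDistortion h) s)) =
        ∫ x in 0..quantile F q, distortedCDF h F x := by
  have hFr : ∀ x, ContinuousWithinAt F (Ici x) x := fun _ => hFc.continuousWithinAt
  have hFh := hdist.isNonnegCDF_distortedCDF hconv hF
  have hQ := hF.quantile_nonneg hFr hq.2
  have hanti : Antitone fun s => mitIntegral F (min q (invChordSlope (dualDistortion h) s)) :=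
    fun s s' hss' => hF.monotoneOn_mitIntegral hFr (min_lt_of_left_lt hq.2)
      (min_lt_of_left_lt hq.2) (min_le_min_left _ (antitone_invChordSlope hss'))
  refine integrable_and_integral_eq_of_lintegral_ofReal_eq hanti.measurable.aestronglyMeasurable
    (ae_of_all _ fun s => hF.mitIntegral_nonneg hFr (min_lt_of_left_lt hq.2))
    (intervalIntegral.integral_nonneg hQ fun x _ => hFh.nonneg x) ?_
  rw [hF.lintegral_mitIntegral_min_invChordSlope hFc hFs hdist.monotoneOn_dualDistortion
      (hdist.antistarshaped_dualDistortion hconv) hq.2,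
    hF.setOf_pos_and_le_eq_Ioc_quantile hFc hFs hq.2, intervalIntegral.integral_of_le hQ,
    ofReal_integral_eq_lintegral_ofReal hFh.1.intervalIntegrable.1 (ae_of_all _ hFh.nonneg)]
  rfl

theorem IsNonnegCDF.integral_distortedCDF_pos (hF : IsNonnegCDF F) (hFc : Continuous F)
    (hFs : StrictMonoOn F (Ici 0)) (hdist : IsDistortionFn h) (hconv : ConvexOn ℝ (Icc 0 1) h)
    {q : ℝ} (hq : q ∈ Ioo (0 : ℝ) 1) : 0 < ∫ x in 0..quantile F q, distortedCDF h F x :=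
  intervalIntegral.intervalIntegral_pos_of_pos_on
    (hdist.isNonnegCDF_distortedCDF hconv hF).1.intervalIntegrable
    (fun x hx => (hF.pos_of_strictMonoOn hFs hx.1).trans_le
      (hdist.le_dualDistortion hconv (hF.mem_Icc x)))
    (hF.quantile_pos (fun _ => hFc.continuousWithinAt) hq)

end Mixture

section QMIT

variable {F G h : ℝ → ℝ}

theorem QMIT_le.mitIntegral_mul_le (hle : QMIT_le F G) (hF : IsNonnegCDF F) (hG : IsNonnegCDF G)
    (hGc : Continuous G) (hGs : StrictMonoOn G (Ici 0)) {u v : ℝ} (hu : 0 ≤ u) (huv : u ≤ v)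
    (hv : v < 1) : mitIntegral F v * mitIntegral G u ≤ mitIntegral F u * mitIntegral G v := by
  rcases hu.eq_or_lt with rfl | hu
  · simp [hF.mitIntegral_of_nonpos le_rfl, hG.mitIntegral_of_nonpos le_rfl]
  · have hu' : u ∈ Ioo (0 : ℝ) 1 := ⟨hu, huv.trans_lt hv⟩
    have hv' : v ∈ Ioo (0 : ℝ) 1 := ⟨hu.trans_le huv, hv⟩
    exact (div_le_div_iff₀ (hG.mitIntegral_pos hGc hGs hv') (hG.mitIntegral_pos hGc hGs hu')).1
      (hle hu' hv' huv)

theorem QMIT_le.integral_distortedCDF_mul_le (hle : QMIT_le F G) (hF : IsNonnegCDF F)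
    (hFc : Continuous F) (hFs : StrictMonoOn F (Ici 0)) (hG : IsNonnegCDF G)
    (hGc : Continuous G) (hGs : StrictMonoOn G (Ici 0)) (hdist : IsDistortionFn h)
    (hconv : ConvexOn ℝ (Icc 0 1) h) {q₁ q₂ : ℝ} (hq₁ : q₁ ∈ Ioo (0 : ℝ) 1)
    (hq₂ : q₂ ∈ Ioo (0 : ℝ) 1) (hq : q₁ ≤ q₂) :
    (∫ x in 0..quantile F q₂, distortedCDF h F x) * (∫ x in 0..quantile G q₁, distortedCDF h G x) ≤
      (∫ x in 0..quantile F q₁, distortedCDF h F x) *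
        ∫ x in 0..quantile G q₂, distortedCDF h G x := by
  have hGr : ∀ x, ContinuousWithinAt G (Ici x) x := fun _ => hGc.continuousWithinAt
  obtain ⟨hF₁, hF₁_eq⟩ := hF.integral_mitIntegral_min_invChordSlope hFc hFs hdist hconv hq₁
  obtain ⟨hF₂, hF₂_eq⟩ := hF.integral_mitIntegral_min_invChordSlope hFc hFs hdist hconv hq₂
  obtain ⟨hG₁, hG₁_eq⟩ := hG.integral_mitIntegral_min_invChordSlope hGc hGs hdist hconv hq₁
  obtain ⟨hG₂, hG₂_eq⟩ := hG.integral_mitIntegral_min_invChordSlope hGc hGs hdist hconv hq₂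
  rw [← hF₁_eq, ← hF₂_eq, ← hG₁_eq, ← hG₂_eq]
  exact integral_mul_integral_le_of_cross hq₁.1.le hq invChordSlope_nonneg
    (fun u hu v hv huv => hle.mitIntegral_mul_le hF hG hGc hGs hu.1 huv (hv.2.trans_lt hq₂.2))
    ((hG.monotoneOn_mitIntegral hGr).mono fun u hu => hu.2.trans_lt hq₂.2)
    (fun u hu => hG.mitIntegral_nonneg hGr (hu.2.trans_lt hq₂.2))
    (hG.mitIntegral_pos hGc hGs hq₁) hF₁ hF₂ hG₁ hG₂

end QMIT

theorem qmit_preserved_by_convex_distortion_general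
    (F G f g h : ℝ → ℝ)
    (hF : IsNonnegCDF F) (hG : IsNonnegCDF G)
    (hFstrict : StrictMonoOn F (Ici 0)) (hGstrict : StrictMonoOn G (Ici 0))
    (hfd : ∀ x : ℝ, HasDerivAt F (f x) x) (hgd : ∀ x : ℝ, HasDerivAt G (g x) x)
    (hdist : IsDistortionFn h)
    (hconv : ConvexOn ℝ (Icc 0 1) h)
    (hle : QMIT_le F G) :
    QMIT_le (distortedCDF h F) (distortedCDF h G) := by
  have hFc : Continuous F := continuous_iff_continuousAt.2 fun x => (hfd x).continuousAt
  have hGc : Continuous G := continuous_iff_continuousAt.2 fun x => (hgd x).continuousAt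
  intro p₁ hp₁ p₂ hp₂ hp
  have hq₁ := hdist.quantile_distortedCDF_uniformCDF_mem hconv hp₁
  have hq₂ := hdist.quantile_distortedCDF_uniformCDF_mem hconv hp₂
  have hq := (hdist.isNonnegCDF_distortedCDF hconv isNonnegCDF_uniformCDF).quantile_mono
    hdist.continuousWithinAt_distortedCDF_uniformCDF hp hp₂.2
  simp only [mitIntegral, hdist.quantile_distortedCDF hconv hF hp₁,
    hdist.quantile_distortedCDF hconv hF hp₂, hdist.quantile_distortedCDF hconv hG hp₁,
    hdist.quantile_distortedCDF hconv hG hp₂]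
  rw [div_le_div_iff₀ (hG.integral_distortedCDF_pos hGc hGstrict hdist hconv hq₂)
    (hG.integral_distortedCDF_pos hGc hGstrict hdist hconv hq₁)]
  exact hle.integral_distortedCDF_mul_le hF hFc hFstrict hG hGc hGstrict hdist hconv hq₁ hq₂ hq

/-- **Remark 2 (preservation of the qmit order by convex distortions).**
Let `X`, `Y` be nonnegative absolutely continuous random variables with finite means and
strictly increasing distribution functions `F`, `G`, and let `h` be a convex, strictly
increasing distortion function.  If `X ≤_qmit Y`, then `X_h ≤_qmit Y_h`. -/
theorem qmit_preserved_by_convex_distortion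
    (F G f g h : ℝ → ℝ)
    (hF : IsNonnegCDF F) (hG : IsNonnegCDF G)
    (hFstrict : StrictMonoOn F (Ici 0)) (hGstrict : StrictMonoOn G (Ici 0))
    (hfd : ∀ x : ℝ, HasDerivAt F (f x) x) (hgd : ∀ x : ℝ, HasDerivAt G (g x) x)
    (hFmean : IntegrableOn (fun x => 1 - F x) (Ioi 0) volume)
    (hGmean : IntegrableOn (fun x => 1 - G x) (Ioi 0) volume)
    (hdist : IsDistortionFn h) (hstrict : StrictMonoOn h (Icc 0 1))
    (hconv : ConvexOn ℝ (Icc 0 1) h)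
    (hle : QMIT_le F G) :
    QMIT_le (distortedCDF h F) (distortedCDF h G) :=
  qmit_preserved_by_convex_distortion_general F G f g h hF hG hFstrict hGstrict hfd hgd hdist hconv
    hle
end

section
/- Let X and Y be nonnegative random variables with continuous, strictly increasing distribution functions F and G, and let h be a continuous, strictly increasing distortion function. Then for all x ≥ 0, G_h^{-1}(F_h(x)) = G^{-1}(F(x)), where F_h = h*∘F and G_h = h*∘G are the distribution functions of the distorted random variables X_h and Y_h. Consequently, if G^{-1}∘F is convex on [0,∞) then G_h^{-1}∘F_h is convex on [0,∞) (the convex transform order X ≤_c Y is preserved by h), and if x ↦ G^{-1}(F(x))/x is increasing on (0,∞) then so is x ↦ G_h^{-1}(F_h(x))/x (the star order X ≤_* Y is preserved by h). -/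
open MeasureTheory Set Filter

/-- Distortions preserve the composition `G⁻¹ ∘ F`: `G_h⁻¹(F_h(x)) = G⁻¹(F(x))` for all
`x ≥ 0`, so the convex transform order and the star order are preserved by any continuous
strictly increasing distortion function. -/
theorem distortion_preserves_convex_transform_and_star_order
    (F G h : ℝ → ℝ)
    (hF : IsNonnegCDF F) (hG : IsNonnegCDF G)
    (hFcont : Continuous F) (hGcont : Continuous G)
    (hFstrict : StrictMonoOn F (Ici 0)) (hGstrict : StrictMonoOn G (Ici 0))
    (hdist : IsDistortionFn h) (hhcont : ContinuousOn h (Icc 0 1))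
    (hhstrict : StrictMonoOn h (Icc 0 1)) :
    (∀ x : ℝ, 0 ≤ x →
      quantile (distortedCDF h G) (distortedCDF h F x) = quantile G (F x)) ∧
    (ConvexOn ℝ (Ici 0) (fun x => quantile G (F x)) →
      ConvexOn ℝ (Ici 0) (fun x => quantile (distortedCDF h G) (distortedCDF h F x))) ∧
    (MonotoneOn (fun x => quantile G (F x) / x) (Ioi 0) →
      MonotoneOn (fun x => quantile (distortedCDF h G) (distortedCDF h F x) / x) (Ioi 0)) := by
  have Fmem : ∀ x : ℝ, F x ∈ Icc (0:ℝ) 1 := by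
    intro x
    constructor
    · rcases le_or_gt x 0 with hx | hx
      · rw [hF.2.1 x hx]
      · rw [← hF.2.1 0 le_rfl]; exact hF.1 hx.le
    · exact hF.1.ge_of_tendsto hF.2.2 x
  have Gmem : ∀ x : ℝ, G x ∈ Icc (0:ℝ) 1 := by
    intro x
    constructor
    · rcases le_or_gt x 0 with hx | hx
      · rw [hG.2.1 x hx]
      · rw [← hG.2.1 0 le_rfl]; exact hG.1 hx.le
    · exact hG.1.ge_of_tendsto hG.2.2 x
  have key : ∀ x : ℝ, quantile (distortedCDF h G) (distortedCDF h F x) = quantile G (F x) := by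
    intro x
    unfold quantile
    congr 1
    ext y
    simp only [mem_setOf_eq, distortedCDF]
    have h1 : (1 : ℝ) - F x ∈ Icc (0:ℝ) 1 := by
      have := Fmem x; constructor <;> [linarith [this.2]; linarith [this.1]]
    have h2 : (1 : ℝ) - G y ∈ Icc (0:ℝ) 1 := by
      have := Gmem y; constructor <;> [linarith [this.2]; linarith [this.1]]
    constructor
    · intro hle
      have : h (1 - G y) ≤ h (1 - F x) := by linarith
      have := (hhstrict.le_iff_le h2 h1).mp this
      linarith
    · intro hle
      have : (1:ℝ) - G y ≤ 1 - F x := by linarith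
      have := hhstrict.monotoneOn h2 h1 this
      linarith
  refine ⟨fun x _ => key x, ?_, ?_⟩
  · intro hc
    refine ⟨hc.1, fun x hx y hy a b ha hb hab => ?_⟩
    simp only [key x, key y, key (a • x + b • y)]
    exact hc.2 hx hy ha hb hab
  · intro hm
    intro x hx y hy hxy
    simp only [key x, key y]
    exact hm hx hy hxy
end

section
/- Let f:[0,1]→[0,1] be increasing with f(1)=1 and continuously differentiable on (0,1), let a₁,a₂,a₃ be real numbers with a₃ ≠ 0, and define h_T(p) = a₁p + a₂p·f(p) + a₃p·f(p)² for p ∈ [0,1], and ω = −a₂/(2a₃). Then: (i) if a₃ > 0 and ω ≥ 1, h_T is antistarshaped; (ii) if a₃ > 0, ω ∈ (0,1) and f(0) ≥ ω, h_T is starshaped; (iii) if a₃ > 0 and ω ≤ 0, h_T is starshaped; (iv) if a₃ < 0 and ω ≥ 1, h_T is starshaped; (v) if a₃ < 0, ω ∈ (0,1) and f(0) ≥ ω, h_T is antistarshaped; (vi) if a₃ < 0 and ω ≤ 0, h_T is antistarshaped. -/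
open Set Filter

/-- **Corollary 1 (systems with 3 exchangeable components).**
For `h_T(p) = a₁ p + a₂ p f(p) + a₃ p f(p)²` and `ω = -a₂/(2a₃)`:
if `a₃ > 0` then `h_T` is antistarshaped when `ω ≥ 1`, starshaped when `ω ∈ (0,1)` and
`f(0) ≥ ω`, and starshaped when `ω ≤ 0`; if `a₃ < 0` the conclusions are interchanged. -/
theorem durante_three_component_system_distortion
    (f : ℝ → ℝ)
    (hmaps : MapsTo f (Icc 0 1) (Icc 0 1)) (hmono : MonotoneOn f (Icc 0 1))
    (hf1 : f 1 = 1) (hdiff : ContDiffOn ℝ 1 f (Ioo 0 1))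
    (a1 a2 a3 : ℝ) (ha3 : a3 ≠ 0) :
    let hT : ℝ → ℝ := fun p => a1 * p + a2 * p * f p + a3 * p * (f p) ^ 2
    let ω : ℝ := -a2 / (2 * a3)
    (0 < a3 → 1 ≤ ω → Antistarshaped hT) ∧
    (0 < a3 → ω ∈ Ioo (0:ℝ) 1 → ω ≤ f 0 → Starshaped hT) ∧
    (0 < a3 → ω ≤ 0 → Starshaped hT) ∧
    (a3 < 0 → 1 ≤ ω → Starshaped hT) ∧
    (a3 < 0 → ω ∈ Ioo (0:ℝ) 1 → ω ≤ f 0 → Antistarshaped hT) ∧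
    (a3 < 0 → ω ≤ 0 → Antistarshaped hT) := by
  intro hT ω
  have hval : ∀ p ∈ Ioc (0:ℝ) 1, hT p / p = a1 + a2 * f p + a3 * (f p)^2 := by
    intro p hp
    have hp0 : p ≠ 0 := ne_of_gt hp.1
    show (a1 * p + a2 * p * f p + a3 * p * (f p) ^ 2) / p = _
    field_simp
  have hmem : ∀ p ∈ Ioc (0:ℝ) 1, f p ∈ Icc (0:ℝ) 1 :=
    fun p hp => hmaps ⟨hp.1.le, hp.2⟩
  have hle : ∀ p ∈ Ioc (0:ℝ) 1, ∀ q ∈ Ioc (0:ℝ) 1, p ≤ q → f p ≤ f q :=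
    fun p hp q hq h => hmono ⟨hp.1.le, hp.2⟩ ⟨hq.1.le, hq.2⟩ h
  have hf0le : ∀ p ∈ Ioc (0:ℝ) 1, f 0 ≤ f p :=
    fun p hp => hmono ⟨le_rfl, zero_le_one⟩ ⟨hp.1.le, hp.2⟩ hp.1.le
  refine ⟨?_, ?_, ?_, ?_, ?_, ?_⟩
  · intro ha hω p hp q hq hpq
    have h2 : (0:ℝ) < 2 * a3 := by linarith
    rw [le_div_iff₀ h2] at hω
    simp only [hval p hp, hval q hq]
    have e1 : a3 * f p ≤ a3 := mul_le_of_le_one_right ha.le (hmem p hp).2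
    have e2 : a3 * f q ≤ a3 := mul_le_of_le_one_right ha.le (hmem q hq).2
    have key : 0 ≤ (f q - f p) * (-a2 - a3 * f p - a3 * f q) :=
      mul_nonneg (by linarith [hle p hp q hq hpq]) (by linarith)
    nlinarith [key]
  · intro ha hω hω0 p hp q hq hpq
    have h2 : (0:ℝ) < 2 * a3 := by linarith
    have hp' : -a2 ≤ f p * (2 * a3) := by
      have : ω ≤ f p := le_trans hω0 (hf0le p hp)
      rwa [div_le_iff₀ h2] at this
    have hq' : -a2 ≤ f q * (2 * a3) := by
      have : ω ≤ f q := le_trans hω0 (hf0le q hq)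
      rwa [div_le_iff₀ h2] at this
    simp only [hval p hp, hval q hq]
    nlinarith [hle p hp q hq hpq]
  · intro ha hω p hp q hq hpq
    have h2 : (0:ℝ) < 2 * a3 := by linarith
    have ha2 : 0 ≤ a2 := by
      have := hω
      rw [div_le_iff₀ h2] at this
      linarith
    simp only [hval p hp, hval q hq]
    have e1 : 0 ≤ a3 * f p := mul_nonneg ha.le (hmem p hp).1
    have e2 : 0 ≤ a3 * f q := mul_nonneg ha.le (hmem q hq).1
    have key : 0 ≤ (f q - f p) * (a2 + a3 * f p + a3 * f q) :=
      mul_nonneg (by linarith [hle p hp q hq hpq]) (by linarith)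
    nlinarith [key]
  · intro ha hω p hp q hq hpq
    have h2 : 2 * a3 < (0:ℝ) := by linarith
    rw [le_div_iff_of_neg h2] at hω
    simp only [hval p hp, hval q hq]
    have e1 : a3 ≤ a3 * f p := by
      nlinarith [mul_nonneg (by linarith [(hmem p hp).2] : (0:ℝ) ≤ 1 - f p) (by linarith : (0:ℝ) ≤ -a3)]
    have e2 : a3 ≤ a3 * f q := by
      nlinarith [mul_nonneg (by linarith [(hmem q hq).2] : (0:ℝ) ≤ 1 - f q) (by linarith : (0:ℝ) ≤ -a3)]
    have key : 0 ≤ (f q - f p) * (a2 + a3 * f p + a3 * f q) :=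
      mul_nonneg (by linarith [hle p hp q hq hpq]) (by linarith)
    nlinarith [key]
  · intro ha hω hω0 p hp q hq hpq
    have h2 : 2 * a3 < (0:ℝ) := by linarith
    have hp' : f p * (2 * a3) ≤ -a2 := by
      have : ω ≤ f p := le_trans hω0 (hf0le p hp)
      rwa [div_le_iff_of_neg h2] at this
    have hq' : f q * (2 * a3) ≤ -a2 := by
      have : ω ≤ f q := le_trans hω0 (hf0le q hq)
      rwa [div_le_iff_of_neg h2] at this
    simp only [hval p hp, hval q hq]
    nlinarith [hle p hp q hq hpq]
  · intro ha hω p hp q hq hpq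
    have h2 : 2 * a3 < (0:ℝ) := by linarith
    have ha2 : a2 ≤ 0 := by
      have := hω
      rw [div_le_iff_of_neg h2] at this
      linarith
    simp only [hval p hp, hval q hq]
    have e1 : a3 * f p ≤ 0 := mul_nonpos_of_nonpos_of_nonneg ha.le (hmem p hp).1
    have e2 : a3 * f q ≤ 0 := mul_nonpos_of_nonpos_of_nonneg ha.le (hmem q hq).1
    have key : 0 ≤ (f q - f p) * (-a2 - a3 * f p - a3 * f q) :=
      mul_nonneg (by linarith [hle p hp q hq hpq]) (by linarith)
    nlinarith [key]
end

section
/- Let f:[0,1]→[0,1] be increasing with f(1)=1 and continuously differentiable on (0,1), let a₁,a₂,a₃,a₄ be real numbers with a₄ ≠ 0, and define h_T(p) = a₁p + a₂p·f(p) + a₃p·f(p)² + a₄p·f(p)³ for p ∈ [0,1]. Let Δ = a₃² − 3a₂a₄, and when Δ > 0 let x_{[1]} ≤ x_{[2]} be the two real roots of 3a₄x² + 2a₃x + a₂ = 0. Case a₄ > 0: (i) if Δ ≤ 0, h_T is starshaped; if Δ > 0 then (ii) if x_{[2]} ≤ 0, h_T is starshaped; (iii) if x_{[2]} ∈ (0,1)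 and f(0) ≥ x_{[2]}, h_T is starshaped; (iv) if x_{[1]} ≤ 0 and x_{[2]} ≥ 1, h_T is antistarshaped; (v) if x_{[1]} ∈ (0,1), x_{[2]} ≥ 1 and f(0) ≥ x_{[1]}, h_T is antistarshaped; (vi) if x_{[1]} ≥ 1, h_T is starshaped. Case a₄ < 0: the same six implications hold with 'starshaped' and 'antistarshaped' interchanged. -/
open Set Filter

lemma durante_star_aux (f : ℝ → ℝ) (hmono : MonotoneOn f (Icc 0 1)) (hf1 : f 1 = 1)
    (a1 a2 a3 a4 : ℝ)
    (hP : ∀ t ∈ Icc (f 0) 1, 0 ≤ 3 * a4 * t ^ 2 + 2 * a3 * t + a2) :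
    Starshaped (fun p => a1 * p + a2 * p * f p + a3 * p * (f p) ^ 2 + a4 * p * (f p) ^ 3) := by
  intro p hp q hq hpq
  have hpm : p ∈ Icc (0:ℝ) 1 := ⟨hp.1.le, hp.2⟩
  have hqm : q ∈ Icc (0:ℝ) 1 := ⟨hq.1.le, hq.2⟩
  have h0m : (0:ℝ) ∈ Icc (0:ℝ) 1 := ⟨le_rfl, zero_le_one⟩
  have h1m : (1:ℝ) ∈ Icc (0:ℝ) 1 := ⟨zero_le_one, le_rfl⟩
  have hxy : f p ≤ f q := hmono hpm hqm hpq
  have hx : f p ∈ Icc (f 0) 1 := ⟨hmono h0m hpm hp.1.le, hf1 ▸ hmono hpm h1m hp.2⟩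
  have hy : f q ∈ Icc (f 0) 1 := ⟨hmono h0m hqm hq.1.le, hf1 ▸ hmono hqm h1m hq.2⟩
  have hm : (f p + f q) / 2 ∈ Icc (f 0) 1 :=
    ⟨by nlinarith [hx.1, hy.1], by nlinarith [hx.2, hy.2]⟩
  have hPx := hP _ hx
  have hPy := hP _ hy
  have hPm := hP _ hm
  have ep : (a1 * p + a2 * p * f p + a3 * p * (f p) ^ 2 + a4 * p * (f p) ^ 3) / p
      = a1 + a2 * f p + a3 * (f p) ^ 2 + a4 * (f p) ^ 3 := by
    field_simp [ne_of_gt hp.1]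
  have eq' : (a1 * q + a2 * q * f q + a3 * q * (f q) ^ 2 + a4 * q * (f q) ^ 3) / q
      = a1 + a2 * f q + a3 * (f q) ^ 2 + a4 * (f q) ^ 3 := by
    field_simp [ne_of_gt hq.1]
  simp only [ep, eq']
  nlinarith [mul_nonneg (sub_nonneg.2 hxy) hPx, mul_nonneg (sub_nonneg.2 hxy) hPy,
    mul_nonneg (sub_nonneg.2 hxy) hPm]

lemma durante_anti_aux (f : ℝ → ℝ) (hmono : MonotoneOn f (Icc 0 1)) (hf1 : f 1 = 1)
    (a1 a2 a3 a4 : ℝ)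
    (hP : ∀ t ∈ Icc (f 0) 1, 3 * a4 * t ^ 2 + 2 * a3 * t + a2 ≤ 0) :
    Antistarshaped (fun p => a1 * p + a2 * p * f p + a3 * p * (f p) ^ 2 + a4 * p * (f p) ^ 3) := by
  intro p hp q hq hpq
  have hpm : p ∈ Icc (0:ℝ) 1 := ⟨hp.1.le, hp.2⟩
  have hqm : q ∈ Icc (0:ℝ) 1 := ⟨hq.1.le, hq.2⟩
  have h0m : (0:ℝ) ∈ Icc (0:ℝ) 1 := ⟨le_rfl, zero_le_one⟩
  have h1m : (1:ℝ) ∈ Icc (0:ℝ) 1 := ⟨zero_le_one, le_rfl⟩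
  have hxy : f p ≤ f q := hmono hpm hqm hpq
  have hx : f p ∈ Icc (f 0) 1 := ⟨hmono h0m hpm hp.1.le, hf1 ▸ hmono hpm h1m hp.2⟩
  have hy : f q ∈ Icc (f 0) 1 := ⟨hmono h0m hqm hq.1.le, hf1 ▸ hmono hqm h1m hq.2⟩
  have hm : (f p + f q) / 2 ∈ Icc (f 0) 1 :=
    ⟨by nlinarith [hx.1, hy.1], by nlinarith [hx.2, hy.2]⟩
  have hPx := hP _ hx
  have hPy := hP _ hy
  have hPm := hP _ hm
  have ep : (a1 * p + a2 * p * f p + a3 * p * (f p) ^ 2 + a4 * p * (f p) ^ 3) / p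
      = a1 + a2 * f p + a3 * (f p) ^ 2 + a4 * (f p) ^ 3 := by
    field_simp [ne_of_gt hp.1]
  have eq' : (a1 * q + a2 * q * f q + a3 * q * (f q) ^ 2 + a4 * q * (f q) ^ 3) / q
      = a1 + a2 * f q + a3 * (f q) ^ 2 + a4 * (f q) ^ 3 := by
    field_simp [ne_of_gt hq.1]
  simp only [ep, eq']
  nlinarith [mul_nonneg (sub_nonneg.2 hxy) (neg_nonneg.2 hPx),
    mul_nonneg (sub_nonneg.2 hxy) (neg_nonneg.2 hPy),
    mul_nonneg (sub_nonneg.2 hxy) (neg_nonneg.2 hPm)]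

/-- **Corollary 2 (systems with 4 exchangeable components).**
For `h_T(p) = a₁ p + a₂ p f(p) + a₃ p f(p)² + a₄ p f(p)³`, `Δ = a₃² - 3a₂a₄`, and (when
`Δ > 0`) `x₍₁₎ ≤ x₍₂₎` the two real roots of `3a₄x² + 2a₃x + a₂ = 0`, the six cases for
`a₄ > 0` give starshapedness/antistarshapedness of `h_T` as listed, and for `a₄ < 0` the
same cases hold with the conclusions interchanged. -/
theorem durante_four_component_system_distortion
    (f : ℝ → ℝ)
    (hmaps : MapsTo f (Icc 0 1) (Icc 0 1)) (hmono : MonotoneOn f (Icc 0 1))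
    (hf1 : f 1 = 1) (hdiff : ContDiffOn ℝ 1 f (Ioo 0 1))
    (a1 a2 a3 a4 : ℝ) (ha4 : a4 ≠ 0) :
    let hT : ℝ → ℝ := fun p =>
      a1 * p + a2 * p * f p + a3 * p * (f p) ^ 2 + a4 * p * (f p) ^ 3
    let Δ : ℝ := a3 ^ 2 - 3 * a2 * a4
    let r1 : ℝ := (-a3 - Real.sqrt Δ) / (3 * a4)
    let r2 : ℝ := (-a3 + Real.sqrt Δ) / (3 * a4)
    let x1 : ℝ := min r1 r2
    let x2 : ℝ := max r1 r2
    (0 < a4 →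
      (Δ ≤ 0 → Starshaped hT) ∧
      (0 < Δ →
        (x2 ≤ 0 → Starshaped hT) ∧
        (x2 ∈ Ioo (0:ℝ) 1 → x2 ≤ f 0 → Starshaped hT) ∧
        (x1 ≤ 0 → 1 ≤ x2 → Antistarshaped hT) ∧
        (x1 ∈ Ioo (0:ℝ) 1 → 1 ≤ x2 → x1 ≤ f 0 → Antistarshaped hT) ∧
        (1 ≤ x1 → Starshaped hT))) ∧
    (a4 < 0 →
      (Δ ≤ 0 → Antistarshaped hT) ∧
      (0 < Δ →
        (x2 ≤ 0 → Antistarshaped hT) ∧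
        (x2 ∈ Ioo (0:ℝ) 1 → x2 ≤ f 0 → Antistarshaped hT) ∧
        (x1 ≤ 0 → 1 ≤ x2 → Starshaped hT) ∧
        (x1 ∈ Ioo (0:ℝ) 1 → 1 ≤ x2 → x1 ≤ f 0 → Starshaped hT) ∧
        (1 ≤ x1 → Antistarshaped hT))) := by
  intro hT Δ r1 r2 x1 x2
  have hf0 : 0 ≤ f 0 := (hmaps ⟨le_rfl, zero_le_one⟩).1
  have hx12 : x1 ≤ x2 := min_le_max
  -- factorization when Δ ≥ 0
  have hfac : 0 ≤ Δ → ∀ t : ℝ,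
      3 * a4 * t ^ 2 + 2 * a3 * t + a2 = 3 * a4 * (t - x1) * (t - x2) := by
    intro hΔ t
    have hs : Real.sqrt Δ * Real.sqrt Δ = Δ := Real.mul_self_sqrt hΔ
    have hΔdef : Δ = a3 ^ 2 - 3 * a2 * a4 := rfl
    have hr : 3 * a4 * (t - r1) * (t - r2) = 3 * a4 * t ^ 2 + 2 * a3 * t + a2 := by
      show 3 * a4 * (t - (-a3 - Real.sqrt Δ) / (3 * a4)) * (t - (-a3 + Real.sqrt Δ) / (3 * a4))
          = _
      have h3 : (3 : ℝ) * a4 ≠ 0 := by positivity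
      field_simp
      nlinarith [hs]
    have hx : (t - x1) * (t - x2) = (t - r1) * (t - r2) := by
      rcases le_total r1 r2 with h | h
      · show (t - min r1 r2) * (t - max r1 r2) = _
        rw [min_eq_left h, max_eq_right h]
      · show (t - min r1 r2) * (t - max r1 r2) = _
        rw [min_eq_right h, max_eq_left h]; ring
    calc 3 * a4 * t ^ 2 + 2 * a3 * t + a2 = 3 * a4 * (t - r1) * (t - r2) := hr.symm
      _ = 3 * a4 * ((t - r1) * (t - r2)) := by ring
      _ = 3 * a4 * ((t - x1) * (t - x2)) := by rw [hx]
      _ = 3 * a4 * (t - x1) * (t - x2) := by ring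
  constructor
  · intro ha
    constructor
    · intro hΔ
      apply durante_star_aux f hmono hf1
      intro t _
      have hΔdef : Δ = a3 ^ 2 - 3 * a2 * a4 := rfl
      nlinarith [sq_nonneg (3 * a4 * t + a3), hΔdef ▸ hΔ, ha]
    · intro hΔ
      have hF := hfac hΔ.le
      refine ⟨?_, ?_, ?_, ?_, ?_⟩
      · intro h2
        apply durante_star_aux f hmono hf1
        intro t ht
        rw [hF t]
        have : 0 ≤ t := le_trans hf0 ht.1
        exact mul_nonneg (mul_nonneg (by linarith) (by linarith)) (by linarith)
      · rintro ⟨h20, h21⟩ hf02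
        apply durante_star_aux f hmono hf1
        intro t ht
        rw [hF t]
        have : x2 ≤ t := le_trans hf02 ht.1
        exact mul_nonneg (mul_nonneg (by linarith) (by linarith)) (by linarith)
      · intro h10 h21
        apply durante_anti_aux f hmono hf1
        intro t ht
        rw [hF t]
        have h1 : 0 ≤ t - x1 := by linarith [le_trans hf0 ht.1]
        have h2 : t - x2 ≤ 0 := by linarith [ht.2]
        exact mul_nonpos_of_nonneg_of_nonpos (mul_nonneg (by linarith) h1) h2
      · rintro ⟨h10, h11⟩ h21 hf01
        apply durante_anti_aux f hmono hf1
        intro t ht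
        rw [hF t]
        have h1 : 0 ≤ t - x1 := by linarith [le_trans hf01 ht.1]
        have h2 : t - x2 ≤ 0 := by linarith [ht.2]
        exact mul_nonpos_of_nonneg_of_nonpos (mul_nonneg (by linarith) h1) h2
      · intro h11
        apply durante_star_aux f hmono hf1
        intro t ht
        rw [hF t]
        have h1 : t - x1 ≤ 0 := by linarith [ht.2]
        have h2 : t - x2 ≤ 0 := by linarith [ht.2]
        have := mul_nonneg (neg_nonneg.2 h1) (neg_nonneg.2 h2)
        nlinarith [ha]
  · intro ha
    constructor
    · intro hΔ
      apply durante_anti_aux f hmono hf1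
      intro t _
      have hΔdef : Δ = a3 ^ 2 - 3 * a2 * a4 := rfl
      nlinarith [sq_nonneg (3 * a4 * t + a3), hΔdef ▸ hΔ, ha]
    · intro hΔ
      have hF := hfac hΔ.le
      refine ⟨?_, ?_, ?_, ?_, ?_⟩
      · intro h2
        apply durante_anti_aux f hmono hf1
        intro t ht
        rw [hF t]
        have h1 : 0 ≤ t - x1 := by linarith [le_trans hf0 ht.1]
        have h2' : 0 ≤ t - x2 := by linarith [le_trans hf0 ht.1]
        nlinarith [mul_nonneg h1 h2', ha]
      · rintro ⟨h20, h21⟩ hf02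
        apply durante_anti_aux f hmono hf1
        intro t ht
        rw [hF t]
        have h1 : 0 ≤ t - x1 := by linarith [le_trans hf02 ht.1]
        have h2' : 0 ≤ t - x2 := by linarith [le_trans hf02 ht.1]
        nlinarith [mul_nonneg h1 h2', ha]
      · intro h10 h21
        apply durante_star_aux f hmono hf1
        intro t ht
        rw [hF t]
        have h1 : 0 ≤ t - x1 := by linarith [le_trans hf0 ht.1]
        have h2 : t - x2 ≤ 0 := by linarith [ht.2]
        nlinarith [mul_nonneg h1 (neg_nonneg.2 h2), ha]
      · rintro ⟨h10, h11⟩ h21 hf01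
        apply durante_star_aux f hmono hf1
        intro t ht
        rw [hF t]
        have h1 : 0 ≤ t - x1 := by linarith [le_trans hf01 ht.1]
        have h2 : t - x2 ≤ 0 := by linarith [ht.2]
        nlinarith [mul_nonneg h1 (neg_nonneg.2 h2), ha]
      · intro h11
        apply durante_anti_aux f hmono hf1
        intro t ht
        rw [hF t]
        have h1 : t - x1 ≤ 0 := by linarith [ht.2]
        have h2 : t - x2 ≤ 0 := by linarith [ht.2]
        nlinarith [mul_nonneg (neg_nonneg.2 h1) (neg_nonneg.2 h2), ha]
end

section
/- The decreasing mean residual life order is not preserved by all distortion functions: let X and Y be the nonnegative random variables with quantile functions F^{-1}(p) = (17/8)p − (1/2)p² and G^{-1}(p) = ln(15/8 + p) for p ∈ (0,1), and let h(p) = p⁵. Then X ≤_dmrl Y, but X_h ≤_dmrl Y_h fails. -/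
open MeasureTheory Set Filter

/-- The distribution function of the random variable `X` of Example 1, whose quantile
function on `(0,1)` is `F⁻¹(p) = (17/8) p - (1/2) p²`. -/
noncomputable def Fex : ℝ → ℝ := fun x => max 0 (min 1 (17/8 - Real.sqrt (289/64 - 2*x)))

/-- The distribution function of the random variable `Y` of Example 1, whose quantile
function on `(0,1)` is `G⁻¹(p) = ln(15/8 + p)`. -/
noncomputable def Gex : ℝ → ℝ := fun x => max 0 (min 1 (Real.exp x - 15/8))

/-!
Both quantile functions are explicit, so the substitution `x = F⁻¹(v)` turns the excess-wealth
integrals into elementary integrals in `q = 1 - u`. For `h(p) = pⁿ` at level `1 - (1 - u)ⁿ`,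
`X_h` gives `9/8 qⁿ⁺¹/(n+1) + qⁿ⁺²/(n+2)` and `Y_h` gives `cⁿ Rₙ(q/c)` with `c = 23/8`,
where `Rₙ` is the remainder of the series `-log (1 - x) = ∑ xᵏ/k` after `n` terms.

For `n = 1` the ratio is decreasing in `q`: its derivative has the sign of an inequality
that follows from `R₁(x) ≥ x²/2 + x³/3 + x⁴/4 + x⁵/5`. For `n = 5` the ratio is not
monotone: it is larger at `u = 1/1000` than at `u = 1/200`, by a relative margin of about
`3 · 10⁻⁶`, which 21 terms of the logarithmic series certify.
-/

theorem quantile_eq_of_le_of_forall_lt {F : ℝ → ℝ} {p q : ℝ} (hq : p ≤ F q)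
    (hlt : ∀ x < q, F x < p) : quantile F p = q := by
  have hlb : q ∈ lowerBounds {x | p ≤ F x} := fun x hx => not_lt.1 fun h => (hlt x h).not_ge hx
  exact le_antisymm (csInf_le ⟨q, hlb⟩ hq) (le_csInf ⟨q, hq⟩ hlb)

theorem quantile_distortedCDF {h F : ℝ → ℝ} (hh : StrictMonoOn h (Icc 0 1))
    (hF : ∀ x, F x ∈ Icc 0 1) {u : ℝ} (hu : u ∈ Icc 0 1) :
    quantile (distortedCDF h F) (1 - h (1 - u)) = quantile F u := by
  have hu' : 1 - u ∈ Icc (0:ℝ) 1 := ⟨by linarith [hu.2], by linarith [hu.1]⟩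
  have hF' : ∀ x, 1 - F x ∈ Icc (0:ℝ) 1 := fun x =>
    ⟨by linarith [(hF x).2], by linarith [(hF x).1]⟩
  unfold quantile distortedCDF
  congr 1
  ext x
  simp only [mem_ofPred_eq, sub_le_sub_iff_left, hh.le_iff_le (hF' x) hu']

theorem ewIntegral_distortedCDF {h F : ℝ → ℝ} (hh : StrictMonoOn h (Icc 0 1))
    (hF : ∀ x, F x ∈ Icc 0 1) {u : ℝ} (hu : u ∈ Icc 0 1) :
    ewIntegral (distortedCDF h F) (1 - h (1 - u)) = ∫ x in Ioi (quantile F u), h (1 - F x) := by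
  simp only [ewIntegral, quantile_distortedCDF hh hF hu, distortedCDF, sub_sub_cancel]

theorem ewIntegral_distortedCDF_pow {F : ℝ → ℝ} (hF : ∀ x, F x ∈ Icc 0 1) {n : ℕ}
    (hn : n ≠ 0) {u : ℝ} (hu : u ∈ Icc 0 1) :
    ewIntegral (distortedCDF (fun p => p ^ n) F) (1 - (1 - u) ^ n) =
      ∫ x in Ioi (quantile F u), (1 - F x) ^ n :=
  ewIntegral_distortedCDF ((pow_left_strictMonoOn₀ hn).mono fun _ h => h.1) hF hu

theorem setIntegral_Ioi_comp_eq_intervalIntegral_deriv_mul {F φ φ' k : ℝ → ℝ} {u : ℝ}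
    (hu : u ≤ 1) (hF : Continuous F) (hk : Continuous k) (hk1 : k 1 = 0)
    (hφ : ∀ v ∈ uIcc u 1, HasDerivAt φ (φ' v) v) (hφ' : ContinuousOn φ' (uIcc u 1))
    (hFφ : LeftInvOn F φ (Icc u 1)) (hF1 : ∀ x, φ 1 ≤ x → F x = 1) :
    ∫ x in Ioi (φ u), k (F x) = ∫ v in u..1, φ' v * k v := by
  have hφu : φ u ≤ φ 1 := by
    by_contra! h
    have : u = 1 := by rw [← hFφ ⟨le_rfl, hu⟩, hF1 _ h.le]
    exact h.ne (by rw [this])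
  calc ∫ x in Ioi (φ u), k (F x) = ∫ x in Ioc (φ u) (φ 1), k (F x) :=
        setIntegral_eq_of_subset_of_forall_sdiff_eq_zero measurableSet_Ioi Ioc_subset_Ioi_self
          fun x hx => by rw [hF1 x (not_le.1 fun h => hx.2 ⟨hx.1, h⟩).le, hk1]
    _ = ∫ v in u..1, φ' v • ((k ∘ F) ∘ φ) v := by
        rw [intervalIntegral.integral_deriv_smul_comp hφ hφ' (hk.comp hF),
          intervalIntegral.integral_of_le hφu]
        rfl
    _ = ∫ v in u..1, φ' v * k v := by
        refine intervalIntegral.integral_congr fun v hv => ?_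
        rw [uIcc_of_le hu] at hv
        simp only [Function.comp_apply, hFφ hv, smul_eq_mul]

noncomputable def logRemainder (n : ℕ) (x : ℝ) : ℝ :=
  -Real.log (1 - x) - ∑ i ∈ Finset.range n, x ^ (i + 1) / (i + 1)

theorem logRemainder_zero_right (n : ℕ) : logRemainder n 0 = 0 := by
  simp [logRemainder]

theorem hasDerivAt_logRemainder (n : ℕ) {x : ℝ} (hx : x < 1) :
    HasDerivAt (logRemainder n) (x ^ n / (1 - x)) x := by
  have h1x : 1 - x ≠ 0 := (sub_pos.2 hx).ne'
  have h := (((hasDerivAt_id' x).const_sub 1).log h1x).neg.sub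
    (HasDerivAt.fun_sum (u := Finset.range n) fun i _ =>
      (hasDerivAt_pow (i + 1) x).div_const ((i : ℝ) + 1))
  refine h.congr_deriv ?_
  have hsum : ∑ i ∈ Finset.range n, ((i + 1 : ℕ) : ℝ) * x ^ (i + 1 - 1) / (i + 1) =
      ∑ i ∈ Finset.range n, x ^ i :=
    Finset.sum_congr rfl fun i _ => by push_cast; field_simp
  have hx1 : x - 1 ≠ 0 := (sub_neg.2 hx).ne
  rw [hsum, geom_sum_eq hx.ne]
  field_simp
  ring

theorem logRemainder_nonneg (n : ℕ) {x : ℝ} (hx0 : 0 ≤ x) (hx1 : x < 1) :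
    0 ≤ logRemainder n x := by
  have hs := Real.hasSum_pow_div_log_of_abs_lt_one (by rwa [abs_of_nonneg hx0])
  exact sub_nonneg.2 (sum_le_hasSum _ (fun i _ => by positivity) hs)

theorem abs_logRemainder_sub_sum_Ico_le {n m : ℕ} (hnm : n ≤ m) {x : ℝ} (hx : |x| < 1) :
    |logRemainder n x - ∑ i ∈ Finset.Ico n m, x ^ (i + 1) / (i + 1)| ≤
      |x| ^ (m + 1) / (1 - |x|) := by
  rw [← abs_neg]
  convert Real.abs_log_sub_add_sum_range_le hx m using 2
  rw [logRemainder, ← Finset.sum_range_add_sum_Ico _ hnm]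
  ring

theorem integral_inv_sub_mul_pow (n : ℕ) {c q : ℝ} (hq : 0 ≤ q) (hqc : q < c) :
    ∫ t in (0:ℝ)..q, (c - t)⁻¹ * t ^ n = c ^ n * logRemainder n (q / c) := by
  have hc : 0 < c := hq.trans_lt hqc
  have hderiv : ∀ t ∈ uIcc 0 q, HasDerivAt (fun t => c ^ n * logRemainder n (t / c))
      ((c - t)⁻¹ * t ^ n) t := by
    intro t ht
    rw [uIcc_of_le hq] at ht
    have htc : t / c < 1 := (div_lt_one hc).2 (ht.2.trans_lt hqc)
    refine (((hasDerivAt_logRemainder n htc).comp t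
      ((hasDerivAt_id' t).div_const c)).const_mul (c ^ n)).congr_deriv ?_
    have : c - t ≠ 0 := (sub_pos.2 (ht.2.trans_lt hqc)).ne'
    rw [div_pow]
    field_simp
  have hcont : ContinuousOn (fun t => (c - t)⁻¹ * t ^ n) (uIcc 0 q) := by
    refine ContinuousOn.mul (ContinuousOn.inv₀ (by fun_prop) fun t ht => ?_) (by fun_prop)
    rw [uIcc_of_le hq] at ht
    exact (sub_pos.2 (ht.2.trans_lt hqc)).ne'
  rw [intervalIntegral.integral_eq_sub_of_hasDerivAt hderiv hcont.intervalIntegrable]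
  simp [logRemainder_zero_right]

theorem integral_add_mul_pow (n : ℕ) (a q : ℝ) :
    ∫ t in (0:ℝ)..q, (a + t) * t ^ n = a * q ^ (n + 1) / (n + 1) + q ^ (n + 2) / (n + 2) := by
  simp only [add_mul, ← pow_succ']
  rw [intervalIntegral.integral_add (Continuous.intervalIntegrable (by fun_prop) _ _)
    (Continuous.intervalIntegrable (by fun_prop) _ _), intervalIntegral.integral_const_mul]
  simp [integral_pow]
  ring

theorem antitoneOn_div_of_hasDerivAt {f g f' g' : ℝ → ℝ} {s : Set ℝ} (hs : Convex ℝ s)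
    (hso : IsOpen s) (hf : ∀ x ∈ s, HasDerivAt f (f' x) x)
    (hg : ∀ x ∈ s, HasDerivAt g (g' x) x) (hg0 : ∀ x ∈ s, 0 < g x)
    (hfg : ∀ x ∈ s, f' x * g x ≤ f x * g' x) :
    AntitoneOn (fun x => f x / g x) s := by
  have hdiv : ∀ x ∈ s,
      HasDerivAt (fun x => f x / g x) ((f' x * g x - f x * g' x) / g x ^ 2) x :=
    fun x hx => (hf x hx).div (hg x hx) (hg0 x hx).ne'
  refine antitoneOn_of_hasDerivWithinAt_nonpos
    (f' := fun x => (f' x * g x - f x * g' x) / g x ^ 2) hs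
    (fun x hx => (hdiv x hx).continuousAt.continuousWithinAt) (fun x hx => ?_) fun x hx => ?_
  · rw [hso.interior_eq] at hx ⊢
    exact (hdiv x hx).hasDerivWithinAt
  · rw [hso.interior_eq] at hx
    exact div_nonpos_of_nonpos_of_nonneg (sub_nonpos.2 (hfg x hx)) (sq_nonneg _)

theorem Fex_mem_Icc (x : ℝ) : Fex x ∈ Icc 0 1 :=
  ⟨le_max_left _ _, max_le zero_le_one (min_le_left _ _)⟩

theorem Gex_mem_Icc (x : ℝ) : Gex x ∈ Icc 0 1 :=
  ⟨le_max_left _ _, max_le zero_le_one (min_le_left _ _)⟩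

theorem Fex_leftInvOn : LeftInvOn Fex (fun v => 17/8 * v - 1/2 * v ^ 2) (Icc 0 1) := by
  intro v hv
  rw [Fex, show 289/64 - 2 * (17/8 * v - 1/2 * v ^ 2) = (17/8 - v) ^ 2 by ring,
    Real.sqrt_sq (by linarith [hv.2]), sub_sub_cancel, min_eq_right hv.2, max_eq_right hv.1]

theorem Gex_leftInvOn : LeftInvOn Gex (fun v => Real.log (15/8 + v)) (Icc 0 1) := by
  intro v hv
  rw [Gex, Real.exp_log (by linarith [hv.1]), add_sub_cancel_left, min_eq_right hv.2,
    max_eq_right hv.1]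

theorem Fex_eq_one {x : ℝ} (hx : 13/8 ≤ x) : Fex x = 1 := by
  have : Real.sqrt (289/64 - 2 * x) ≤ 9/8 :=
    Real.sqrt_le_iff.2 ⟨by norm_num, by linarith⟩
  rw [Fex, min_eq_left (by linarith), max_eq_right zero_le_one]

theorem Gex_eq_one {x : ℝ} (hx : Real.log (23/8) ≤ x) : Gex x = 1 := by
  have : 23/8 ≤ Real.exp x := by
    rwa [← Real.exp_log (by norm_num : (0:ℝ) < 23/8), Real.exp_le_exp]
  rw [Gex, min_eq_left (by linarith), max_eq_right zero_le_one]

theorem Fex_lt {p x : ℝ} (hp : p ∈ Ioo 0 1) (hx : x < 17/8 * p - 1/2 * p ^ 2) : Fex x < p := by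
  have : 17/8 - p < Real.sqrt (289/64 - 2 * x) :=
    Real.lt_sqrt_of_sq_lt (by nlinarith)
  exact max_lt hp.1 ((min_le_right _ _).trans_lt (by linarith))

theorem Gex_lt {p x : ℝ} (hp : p ∈ Ioo 0 1) (hx : x < Real.log (15/8 + p)) : Gex x < p := by
  have : Real.exp x < 15/8 + p := by
    rwa [← Real.exp_log (by linarith [hp.1] : 0 < 15/8 + p), Real.exp_lt_exp]
  exact max_lt hp.1 ((min_le_right _ _).trans_lt (by linarith))

theorem quantile_Fex {p : ℝ} (hp : p ∈ Ioo 0 1) : quantile Fex p = 17/8 * p - 1/2 * p ^ 2 :=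
  quantile_eq_of_le_of_forall_lt (Fex_leftInvOn (Ioo_subset_Icc_self hp)).ge
    fun _ hx => Fex_lt hp hx

theorem quantile_Gex {p : ℝ} (hp : p ∈ Ioo 0 1) : quantile Gex p = Real.log (15/8 + p) :=
  quantile_eq_of_le_of_forall_lt (Gex_leftInvOn (Ioo_subset_Icc_self hp)).ge
    fun _ hx => Gex_lt hp hx

theorem setIntegral_Ioi_quantile_Fex {n : ℕ} (hn : n ≠ 0) {u : ℝ} (hu : u ∈ Ioo 0 1) :
    ∫ x in Ioi (quantile Fex u), (1 - Fex x) ^ n =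
      9/8 * (1 - u) ^ (n + 1) / (n + 1) + (1 - u) ^ (n + 2) / (n + 2) := by
  have hderiv : ∀ v ∈ uIcc u 1, HasDerivAt (fun v : ℝ => 17/8 * v - 1/2 * v ^ 2)
      (9/8 + (1 - v)) v := fun v _ => by
    refine (((hasDerivAt_id' v).const_mul _).sub ((hasDerivAt_pow 2 v).const_mul _)).congr_deriv ?_
    ring
  calc ∫ x in Ioi (quantile Fex u), (1 - Fex x) ^ n
      = ∫ v in u..1, (9/8 + (1 - v)) * (1 - v) ^ n := by
        rw [quantile_Fex hu]
        refine setIntegral_Ioi_comp_eq_intervalIntegral_deriv_mul (k := fun v => (1 - v) ^ n)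
          hu.2.le (by unfold Fex; fun_prop) (by fun_prop) (by simp [hn]) hderiv (by fun_prop)
          (Fex_leftInvOn.mono (Icc_subset_Icc_left hu.1.le)) fun x hx => Fex_eq_one ?_
        linarith
    _ = ∫ t in (0:ℝ)..(1 - u), (9/8 + t) * t ^ n := by
        simpa using intervalIntegral.integral_comp_sub_left (a := u) (b := 1)
          (fun t => (9/8 + t) * t ^ n) 1
    _ = _ := integral_add_mul_pow n _ _

theorem setIntegral_Ioi_quantile_Gex {n : ℕ} (hn : n ≠ 0) {u : ℝ} (hu : u ∈ Ioo 0 1) :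
    ∫ x in Ioi (quantile Gex u), (1 - Gex x) ^ n =
      (23/8) ^ n * logRemainder n ((1 - u) / (23/8)) := by
  have hpos : ∀ v ∈ uIcc u 1, 0 < 23/8 - (1 - v) := fun v hv => by
    rw [uIcc_of_le hu.2.le] at hv
    linarith [hu.1, hv.1]
  have hderiv : ∀ v ∈ uIcc u 1, HasDerivAt (fun v : ℝ => Real.log (15/8 + v))
      (23/8 - (1 - v))⁻¹ v := fun v hv => by
    have h15 : 15/8 + v ≠ 0 := by linarith [hpos v hv]
    refine (((hasDerivAt_id' v).const_add _).log h15).congr_deriv ?_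
    rw [one_div]
    ring
  calc ∫ x in Ioi (quantile Gex u), (1 - Gex x) ^ n
      = ∫ v in u..1, (23/8 - (1 - v))⁻¹ * (1 - v) ^ n := by
        rw [quantile_Gex hu]
        refine setIntegral_Ioi_comp_eq_intervalIntegral_deriv_mul (k := fun v => (1 - v) ^ n)
          hu.2.le (by unfold Gex; fun_prop) (by fun_prop) (by simp [hn]) hderiv
          (ContinuousOn.inv₀ (by fun_prop) fun v hv => (hpos v hv).ne')
          (Gex_leftInvOn.mono (Icc_subset_Icc_left hu.1.le)) fun x hx => Gex_eq_one ?_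
        norm_num at hx
        exact hx
    _ = ∫ t in (0:ℝ)..(1 - u), (23/8 - t)⁻¹ * t ^ n := by
        simpa using intervalIntegral.integral_comp_sub_left (a := u) (b := 1)
          (fun t => (23/8 - t)⁻¹ * t ^ n) 1
    _ = _ := integral_inv_sub_mul_pow n (by linarith [hu.2]) (by linarith [hu.1])

theorem ewIntegral_Fex {p : ℝ} (hp : p ∈ Ioo 0 1) :
    ewIntegral Fex p = 9/16 * (1 - p) ^ 2 + (1 - p) ^ 3 / 3 := by
  have h := setIntegral_Ioi_quantile_Fex one_ne_zero hp
  simp only [pow_one] at h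
  rw [ewIntegral, h]
  norm_num
  ring

theorem ewIntegral_Gex {p : ℝ} (hp : p ∈ Ioo 0 1) :
    ewIntegral Gex p = 23/8 * logRemainder 1 ((1 - p) / (23/8)) := by
  have h := setIntegral_Ioi_quantile_Gex one_ne_zero hp
  simp only [pow_one] at h
  rw [ewIntegral, h]

theorem sq_cubic_le_mul_logRemainder_one {q : ℝ} (hq : q ∈ Ioo 0 1) :
    9/16 * q ^ 2 + q ^ 3 / 3 ≤ (23/8 - q) * (9/8 + q) * (23/8 * logRemainder 1 (q / (23/8))) := by
  obtain ⟨hq0, hq1⟩ := hq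
  have hR (x : ℝ) : logRemainder 1 x =
      logRemainder 5 x + (x ^ 2 / 2 + x ^ 3 / 3 + x ^ 4 / 4 + x ^ 5 / 5) := by
    simp only [logRemainder, Finset.sum_range_succ]
    norm_num
    ring
  have hR5 : 0 ≤ (23/8 - q) * (9/8 + q) * (23/8 * logRemainder 5 (q / (23/8))) :=
    mul_nonneg (mul_nonneg (by linarith) (by linarith)) (mul_nonneg (by norm_num)
      (logRemainder_nonneg 5 (by positivity) (by rw [div_lt_one (by norm_num)]; linarith)))
  have hpow : ∀ k ≥ 3, q ^ k ≤ q ^ 3 := fun k hk => pow_le_pow_of_le_one hq0.le hq1.le hk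
  -- With `R₅` dropped, the difference of the two sides is
  -- `7/69 q³ - 110/1587 q⁴ - 2272/182505 q⁵ - 7552/1399205 q⁶ - 4096/1399205 q⁷`.
  rw [hR]
  linarith [hpow 4 (by norm_num), hpow 5 (by norm_num), hpow 6 (by norm_num),
    hpow 7 (by norm_num), pow_pos hq0 3]

theorem antitoneOn_logRemainder_one_div :
    AntitoneOn (fun q => 23/8 * logRemainder 1 (q / (23/8)) / (9/16 * q ^ 2 + q ^ 3 / 3))
      (Ioo 0 1) := by
  refine antitoneOn_div_of_hasDerivAt (f' := fun q => q / (23/8 - q))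
    (g' := fun q => 9/8 * q + q ^ 2) (convex_Ioo 0 1) isOpen_Ioo (fun q hq => ?_)
    (fun q _ => ?_) (fun q hq => by have := hq.1; positivity) fun q hq => ?_
  · have hq1 : q / (23/8) < 1 := by rw [div_lt_one (by norm_num)]; linarith [hq.2]
    refine (((hasDerivAt_logRemainder 1 hq1).comp q
      ((hasDerivAt_id' q).div_const _)).const_mul _).congr_deriv ?_
    have : 23/8 - q ≠ 0 := by linarith [hq.2]
    field_simp
  · refine (((hasDerivAt_pow 2 q).const_mul _).add
      ((hasDerivAt_pow 3 q).div_const _)).congr_deriv ?_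
    push_cast
    ring
  · have hc : 0 < 23/8 - q := by linarith [hq.2]
    calc q / (23/8 - q) * (9/16 * q ^ 2 + q ^ 3 / 3)
        ≤ q / (23/8 - q) * ((23/8 - q) * (9/8 + q) * (23/8 * logRemainder 1 (q / (23/8)))) :=
          mul_le_mul_of_nonneg_left (sq_cubic_le_mul_logRemainder_one hq)
            (div_nonneg hq.1.le hc.le)
      _ = 23/8 * logRemainder 1 (q / (23/8)) * (9/8 * q + q ^ 2) := by
          rw [mul_assoc (23/8 - q), ← mul_assoc, div_mul_cancel₀ _ hc.ne']
          ring

theorem DMRL_le_Fex_Gex : DMRL_le Fex Gex := by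
  intro a ha b hb hab
  simp only [ewIntegral_Fex ha, ewIntegral_Fex hb, ewIntegral_Gex ha, ewIntegral_Gex hb]
  exact antitoneOn_logRemainder_one_div ⟨by linarith [hb.2], by linarith [hb.1]⟩
    ⟨by linarith [ha.2], by linarith [ha.1]⟩ (by linarith)

theorem ewIntegral_distortedCDF_pow_Fex {n : ℕ} (hn : n ≠ 0) {u : ℝ} (hu : u ∈ Ioo 0 1) :
    ewIntegral (distortedCDF (fun p => p ^ n) Fex) (1 - (1 - u) ^ n) =
      9/8 * (1 - u) ^ (n + 1) / (n + 1) + (1 - u) ^ (n + 2) / (n + 2) :=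
  (ewIntegral_distortedCDF_pow Fex_mem_Icc hn (Ioo_subset_Icc_self hu)).trans
    (setIntegral_Ioi_quantile_Fex hn hu)

theorem ewIntegral_distortedCDF_pow_Gex {n : ℕ} (hn : n ≠ 0) {u : ℝ} (hu : u ∈ Ioo 0 1) :
    ewIntegral (distortedCDF (fun p => p ^ n) Gex) (1 - (1 - u) ^ n) =
      (23/8) ^ n * logRemainder n ((1 - u) / (23/8)) :=
  (ewIntegral_distortedCDF_pow Gex_mem_Icc hn (Ioo_subset_Icc_self hu)).trans
    (setIntegral_Ioi_quantile_Gex hn hu)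

theorem logRemainder_five_lower : (41927492 / 10 ^ 11 : ℝ) ≤ logRemainder 5 (999/2875) := by
  have h := abs_logRemainder_sub_sum_Ico_le (n := 5) (m := 21) (by norm_num)
    (x := 999/2875) (by norm_num [abs_of_pos])
  norm_num [abs_le, abs_of_pos, Finset.sum_Ico_eq_sum_range, Finset.sum_range_succ] at h
  linarith [h.1]

theorem logRemainder_five_upper : logRemainder 5 (199/575) ≤ (40859302 / 10 ^ 11 : ℝ) := by
  have h := abs_logRemainder_sub_sum_Ico_le (n := 5) (m := 21) (by norm_num)
    (x := 199/575) (by norm_num [abs_of_pos])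
  norm_num [abs_le, abs_of_pos, Finset.sum_Ico_eq_sum_range, Finset.sum_range_succ] at h
  linarith [h.2]

theorem not_DMRL_le_distortedCDF_pow_five :
    ¬ DMRL_le (distortedCDF (fun p => p ^ 5) Fex) (distortedCDF (fun p => p ^ 5) Gex) := by
  intro hmono
  have h := hmono (a := 1 - (1 - 1/1000) ^ 5) (b := 1 - (1 - 1/200) ^ 5) (by norm_num)
    (by norm_num) (by norm_num)
  simp only at h
  rw [ewIntegral_distortedCDF_pow_Fex (by norm_num) (by norm_num),
    ewIntegral_distortedCDF_pow_Fex (by norm_num) (by norm_num),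
    ewIntegral_distortedCDF_pow_Gex (by norm_num) (by norm_num),
    ewIntegral_distortedCDF_pow_Gex (by norm_num) (by norm_num)] at h
  norm_num at h
  rw [div_le_div_iff₀ (by norm_num) (by norm_num)] at h
  linarith [logRemainder_five_lower, logRemainder_five_upper]

/-- **Example 1.**  The dmrl order is not preserved by all distortion functions: the
random variables `X`, `Y` with quantile functions `F⁻¹(p) = (17/8) p - (1/2) p²` and
`G⁻¹(p) = ln(15/8 + p)` satisfy `X ≤_dmrl Y`, but for the distortion `h(p) = p⁵` the
comparison `X_h ≤_dmrl Y_h` fails. -/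
theorem dmrl_not_preserved_by_all_distortions :
    (∀ p ∈ Ioo (0:ℝ) 1, quantile Fex p = 17/8 * p - 1/2 * p ^ 2) ∧
    (∀ p ∈ Ioo (0:ℝ) 1, quantile Gex p = Real.log (15/8 + p)) ∧
    DMRL_le Fex Gex ∧
    ¬ DMRL_le (distortedCDF (fun p => p ^ 5) Fex) (distortedCDF (fun p => p ^ 5) Gex) :=
  ⟨fun _ => quantile_Fex, fun _ => quantile_Gex, DMRL_le_Fex_Gex,
    not_DMRL_le_distortedCDF_pow_five⟩
end
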